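/- Let Ω ⊆ ℝⁿ be open, O ⋐ Ω, u ∈ C¹(Ω, ℝᴺ), H ∈ C²(Ω × ℝᴺ × ℝ^{N×n}, ℝ), and A : ℝⁿ → ℝᴺ affine. Define r(λ) := E_∞(u + λA, O) − E_∞(u, O) for λ ≥ 0, where E_∞(v, O) := max_{y ∈ O̅} H(y, v(y), Dv(y)). Let O(u) := { y ∈ O̅ : H(y, u(y), Du(y)) = E_∞(u, O) }. Then the lower right Dini derivative of r at 0 satisfies liminf_{λ→0⁺} r(λ)/λ ≥ max over x ∈ O(u) of [ ⟨H_P(x, u(x), Du(x)), DA⟩ + ⟨H_η(x, u(x), Du(x)), A(x)⟩ ]. -/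

import Mathlib

/-!
Fix a maximiser `x` of `z ↦ H(z, u(z), Du(z))` on `O̅`. Since `x` is still a competitor
for `u + λA`, `r(λ) ≥ φ(λ) - φ(0)` with `φ(λ) = H(x, u(x) + λA(x), Du(x) + λDA)`, and `φ'(0)`
is the right-hand side by the chain rule. The only other input is that `r(λ)/λ` is bounded
above, which follows from a uniform mean value bound for `H` along the segments
`λ ↦ (z, u(z) + λA(z), Du(z) + λDA)`, `z ∈ O̅`, `λ ∈ [0, 1]`.
-/

open scoped RealInnerProductSpace
open Filter Topology

noncomputable section

/-- The gradient matrix `Dv(x) ∈ ℝ^{N×n}` of a map `v : ℝⁿ → ℝᴺ`. -/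
def gradMatrix {n N : ℕ} (v : EuclideanSpace ℝ (Fin n) → EuclideanSpace ℝ (Fin N))
    (x : EuclideanSpace ℝ (Fin n)) : EuclideanSpace ℝ (Fin N × Fin n) :=
  (WithLp.equiv 2 _).symm fun p => fderiv ℝ v x (EuclideanSpace.single p.2 1) p.1

/-- The supremal functional `E_∞(v, O) = sup_{x ∈ O̅} H(x, v(x), Dv(x))`. -/
def Einf {n N : ℕ}
    (H : EuclideanSpace ℝ (Fin n) × EuclideanSpace ℝ (Fin N) ×
      EuclideanSpace ℝ (Fin N × Fin n) → ℝ)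
    (v : EuclideanSpace ℝ (Fin n) → EuclideanSpace ℝ (Fin N))
    (O : Set (EuclideanSpace ℝ (Fin n))) : ℝ :=
  sSup ((fun z => H (z, v z, gradMatrix v z)) '' closure O)

theorem le_liminf_div_of_hasDerivWithinAt {φ r : ℝ → ℝ} {d C : ℝ}
    (hφ : HasDerivWithinAt φ d (Set.Ioi 0) 0)
    (hφr : ∀ᶠ t in 𝓝[>] 0, φ t - φ 0 ≤ r t)
    (hrC : ∀ᶠ t in 𝓝[>] 0, r t ≤ C * t) :
    d ≤ liminf (fun t => r t / t) (𝓝[>] 0) := by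
  -- `hrC` rules out the junk value of `liminf` for a function unbounded above.
  have hslope : Tendsto (fun t => (φ t - φ 0) / t) (𝓝[>] 0) (𝓝 d) := by
    refine ((hasDerivWithinAt_iff_tendsto_slope' (lt_irrefl 0)).1 hφ).congr fun t => ?_
    rw [slope_def_field, sub_zero]
  have hle : ∀ᶠ t in 𝓝[>] 0, (φ t - φ 0) / t ≤ r t / t := by
    filter_upwards [hφr, self_mem_nhdsWithin] with t ht htpos
    exact div_le_div_of_nonneg_right ht (le_of_lt htpos)
  have hcobdd : IsCoboundedUnder (· ≥ ·) (𝓝[>] 0) (fun t => r t / t) := by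
    refine isCoboundedUnder_ge_of_eventually_le _ (x := C) ?_
    filter_upwards [hrC, self_mem_nhdsWithin] with t ht htpos
    exact (div_le_iff₀ htpos).2 ht
  exact hslope.liminf_eq ▸ liminf_le_liminf hle hslope.isBoundedUnder_ge hcobdd

theorem ContDiffOn.exists_sub_le_mul_along_segments {E X : Type*} [NormedAddCommGroup E]
    [NormedSpace ℝ E] [TopologicalSpace X] {H : E → ℝ} {U : Set E} (hU : IsOpen U)
    (hH : ContDiffOn ℝ 1 H U) {S : Set X} (hS : IsCompact S) {p w : X → E}
    (hp : ContinuousOn p S) (hw : ContinuousOn w S)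
    (hpw : ∀ z ∈ S, ∀ t ∈ Set.Icc (0 : ℝ) 1, p z + t • w z ∈ U) :
    ∃ C, ∀ z ∈ S, ∀ t ∈ Set.Icc (0 : ℝ) 1, H (p z + t • w z) - H (p z) ≤ C * t := by
  have hwK : ContinuousOn (fun q : ℝ × X => w q.2) (Set.Icc 0 1 ×ˢ S) :=
    hw.comp continuousOn_snd fun q hq => hq.2
  have hseg : ContinuousOn (fun q : ℝ × X => p q.2 + q.1 • w q.2) (Set.Icc 0 1 ×ˢ S) :=
    (hp.comp continuousOn_snd fun q hq => hq.2).add (continuousOn_fst.smul hwK)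
  have hDH : ContinuousOn (fun q : ℝ × X => ‖fderiv ℝ H (p q.2 + q.1 • w q.2) (w q.2)‖)
      (Set.Icc 0 1 ×ˢ S) :=
    (((hH.continuousOn_fderiv_of_isOpen hU le_rfl).comp hseg
      fun q hq => hpw q.2 hq.2 q.1 hq.1).clm_apply hwK).norm
  obtain ⟨C, hC⟩ := (isCompact_Icc.prod hS).exists_bound_of_continuousOn hDH
  refine ⟨C, fun z hz t ht => ?_⟩
  have hderiv : ∀ s ∈ Set.Icc (0 : ℝ) 1, HasDerivWithinAt (fun s => H (p z + s • w z))
      (fderiv ℝ H (p z + s • w z) (w z)) (Set.Icc 0 1) s := by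
    intro s hs
    have hline : HasDerivAt (fun s : ℝ => p z + s • w z) (w z) s := by
      simpa using ((hasDerivAt_id s).smul_const (w z)).const_add (p z)
    exact (((hH.contDiffAt (hU.mem_nhds (hpw z hz s hs))).differentiableAt one_ne_zero
      ).hasFDerivAt.comp_hasDerivAt s hline).hasDerivWithinAt
  have hmvt := (convex_Icc (0 : ℝ) 1).norm_image_sub_le_of_norm_hasDerivWithin_le hderiv
    (fun s hs => by simpa using hC (s, z) ⟨hs, hz⟩) (Set.left_mem_Icc.2 zero_le_one) ht
  simp only [zero_smul, add_zero, sub_zero, Real.norm_eq_abs, abs_of_nonneg ht.1] at hmvt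
  exact (le_abs_self _).trans hmvt

theorem DifferentiableAt.hasDerivAt_add_smul_inner_gradient {E F G : Type*}
    [NormedAddCommGroup E] [NormedSpace ℝ E]
    [NormedAddCommGroup F] [InnerProductSpace ℝ F] [CompleteSpace F]
    [NormedAddCommGroup G] [InnerProductSpace ℝ G] [CompleteSpace G] {H : E × F × G → ℝ}
    {x : E} {y : F} {Q : G} (hH : DifferentiableAt ℝ H (x, y, Q)) (a : F) (M : G) :
    HasDerivAt (fun t : ℝ => H ((x, y, Q) + t • ((0 : E), a, M)))
      (⟪gradient (fun Q' => H (x, y, Q')) Q, M⟫ +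
        ⟪gradient (fun y' => H (x, y', Q)) y, a⟫) 0 := by
  have hline :
      HasDerivAt (fun t : ℝ => (x, y, Q) + t • ((0 : E), a, M)) ((0 : E), a, M) 0 := by
    simpa using ((hasDerivAt_id (0 : ℝ)).smul_const ((0 : E), a, M)).const_add (x, y, Q)
  have hQ : HasFDerivAt (fun Q' => H (x, y, Q'))
      ((fderiv ℝ H (x, y, Q)).comp ((0 : G →L[ℝ] E).prod ((0 : G →L[ℝ] F).prod
        (ContinuousLinearMap.id ℝ G)))) Q :=
    hH.hasFDerivAt.comp Q ((hasFDerivAt_const x Q).prodMk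
      ((hasFDerivAt_const y Q).prodMk (hasFDerivAt_id Q)))
  have hy : HasFDerivAt (fun y' => H (x, y', Q))
      ((fderiv ℝ H (x, y, Q)).comp ((0 : F →L[ℝ] E).prod ((ContinuousLinearMap.id ℝ F).prod
        (0 : F →L[ℝ] G)))) y :=
    hH.hasFDerivAt.comp y ((hasFDerivAt_const x y).prodMk
      ((hasFDerivAt_id y).prodMk (hasFDerivAt_const Q y)))
  have hsplit : ((0 : E), a, M) = ((0 : E), (0 : F), M) + ((0 : E), a, (0 : G)) := by simp
  have hpartials : ⟪gradient (fun Q' => H (x, y, Q')) Q, M⟫ +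
      ⟪gradient (fun y' => H (x, y', Q)) y, a⟫ = fderiv ℝ H (x, y, Q) ((0 : E), a, M) := by
    rw [inner_gradient_left, inner_gradient_left, hQ.fderiv, hy.fderiv, hsplit, map_add]
    simp
  have hH0 :
      HasFDerivAt H (fderiv ℝ H (x, y, Q)) ((x, y, Q) + (0 : ℝ) • ((0 : E), a, M)) := by
    simpa using hH.hasFDerivAt
  exact hpartials ▸ hH0.comp_hasDerivAt 0 hline

section Jet

variable {n N : ℕ}

def jet (v : EuclideanSpace ℝ (Fin n) → EuclideanSpace ℝ (Fin N))
    (z : EuclideanSpace ℝ (Fin n)) :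
    EuclideanSpace ℝ (Fin n) × EuclideanSpace ℝ (Fin N) × EuclideanSpace ℝ (Fin N × Fin n) :=
  (z, v z, gradMatrix v z)

theorem gradMatrix_add_smul {u A : EuclideanSpace ℝ (Fin n) → EuclideanSpace ℝ (Fin N)}
    {z : EuclideanSpace ℝ (Fin n)} (hu : DifferentiableAt ℝ u z)
    (hA : DifferentiableAt ℝ A z) (t : ℝ) :
    gradMatrix (fun w => u w + t • A w) z = gradMatrix u z + t • gradMatrix A z := by
  have hD : fderiv ℝ (fun w => u w + t • A w) z = fderiv ℝ u z + t • fderiv ℝ A z :=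
    (hu.hasFDerivAt.add (hA.hasFDerivAt.const_smul t)).fderiv
  ext p
  simp [gradMatrix, hD]

theorem jet_add_smul {u A : EuclideanSpace ℝ (Fin n) → EuclideanSpace ℝ (Fin N)}
    {z : EuclideanSpace ℝ (Fin n)} (hu : DifferentiableAt ℝ u z)
    (hA : DifferentiableAt ℝ A z) (t : ℝ) :
    jet (fun w => u w + t • A w) z =
      jet u z + t • ((0 : EuclideanSpace ℝ (Fin n)), A z, gradMatrix A z) := by
  simp [jet, gradMatrix_add_smul hu hA]

theorem ContDiffOn.continuousOn_gradMatrix {Ω : Set (EuclideanSpace ℝ (Fin n))}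
    {v : EuclideanSpace ℝ (Fin n) → EuclideanSpace ℝ (Fin N)} (hv : ContDiffOn ℝ 1 v Ω)
    (hΩ : IsOpen Ω) : ContinuousOn (gradMatrix v) Ω := by
  have hDv := hv.continuousOn_fderiv_of_isOpen hΩ le_rfl
  refine (PiLp.continuousLinearEquiv 2 ℝ _).symm.continuous.comp_continuousOn
    (continuousOn_pi.2 fun p => ?_)
  exact (EuclideanSpace.proj p.1).continuous.comp_continuousOn
    ((ContinuousLinearMap.apply ℝ _ (EuclideanSpace.single p.2 1)).continuous.comp_continuousOn
      hDv)

theorem ContDiffOn.continuousOn_jet {Ω : Set (EuclideanSpace ℝ (Fin n))}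
    {v : EuclideanSpace ℝ (Fin n) → EuclideanSpace ℝ (Fin N)} (hv : ContDiffOn ℝ 1 v Ω)
    (hΩ : IsOpen Ω) : ContinuousOn (jet v) Ω :=
  continuousOn_id.prodMk (hv.continuousOn.prodMk (hv.continuousOn_gradMatrix hΩ))

theorem le_Einf {Ω O : Set (EuclideanSpace ℝ (Fin n))}
    {H : EuclideanSpace ℝ (Fin n) × EuclideanSpace ℝ (Fin N) ×
      EuclideanSpace ℝ (Fin N × Fin n) → ℝ}
    {v : EuclideanSpace ℝ (Fin n) → EuclideanSpace ℝ (Fin N)} (hΩ : IsOpen Ω)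
    (hOc : IsCompact (closure O)) (hOΩ : closure O ⊆ Ω) (hH : ContinuousOn H (Ω ×ˢ Set.univ))
    (hv : ContDiffOn ℝ 1 v Ω) {z : EuclideanSpace ℝ (Fin n)} (hz : z ∈ closure O) :
    H (jet v z) ≤ Einf H v O :=
  le_csSup (hOc.image_of_continuousOn ((hH.comp (hv.continuousOn_jet hΩ)
    fun _ hz => ⟨hz, trivial⟩).mono hOΩ)).bddAbove ⟨z, hz, rfl⟩

theorem Einf_le {O : Set (EuclideanSpace ℝ (Fin n))}
    {H : EuclideanSpace ℝ (Fin n) × EuclideanSpace ℝ (Fin N) ×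
      EuclideanSpace ℝ (Fin N × Fin n) → ℝ}
    {v : EuclideanSpace ℝ (Fin n) → EuclideanSpace ℝ (Fin N)} {c : ℝ}
    (hO : (closure O).Nonempty) (h : ∀ z ∈ closure O, H (jet v z) ≤ c) : Einf H v O ≤ c :=
  csSup_le (hO.image _) (Set.forall_mem_image.2 h)

theorem exists_Einf_add_smul_sub_le {Ω O : Set (EuclideanSpace ℝ (Fin n))}
    {H : EuclideanSpace ℝ (Fin n) × EuclideanSpace ℝ (Fin N) ×
      EuclideanSpace ℝ (Fin N × Fin n) → ℝ}
    {u A : EuclideanSpace ℝ (Fin n) → EuclideanSpace ℝ (Fin N)} (hΩ : IsOpen Ω)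
    (hOc : IsCompact (closure O)) (hOΩ : closure O ⊆ Ω) (hO : (closure O).Nonempty)
    (hH : ContDiffOn ℝ 1 H (Ω ×ˢ Set.univ)) (hu : ContDiffOn ℝ 1 u Ω) (hA : ContDiff ℝ 1 A) :
    ∃ C, ∀ t ∈ Set.Icc (0 : ℝ) 1,
      Einf H (fun z => u z + t • A z) O - Einf H u O ≤ C * t := by
  have hdir : ContinuousOn (fun z => ((0 : EuclideanSpace ℝ (Fin n)), A z, gradMatrix A z))
      (closure O) :=
    continuousOn_const.prodMk (hA.continuous.continuousOn.prodMk
      ((hA.contDiffOn.continuousOn_gradMatrix isOpen_univ).mono (Set.subset_univ _)))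
  obtain ⟨C, hC⟩ := hH.exists_sub_le_mul_along_segments (hΩ.prod isOpen_univ) hOc
    ((hu.continuousOn_jet hΩ).mono hOΩ) hdir fun z hz t _ =>
      ⟨by simpa [jet] using hOΩ hz, trivial⟩
  refine ⟨C, fun t ht => ?_⟩
  suffices Einf H (fun z => u z + t • A z) O ≤ Einf H u O + C * t by linarith
  refine Einf_le hO fun z hz => ?_
  have huz := (hu.contDiffAt (hΩ.mem_nhds (hOΩ hz))).differentiableAt one_ne_zero
  rw [jet_add_smul huz (hA.differentiable one_ne_zero z)]
  linarith [hC z hz t ht, le_Einf hΩ hOc hOΩ hH.continuousOn hu hz]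

end Jet

/-- Lemma 2 of the paper, one-sided Danskin inequality. With
`r(λ) = E_∞(u + λA, O) − E_∞(u, O)`, the lower right Dini derivative of `r` at zero
dominates the maximum over the argmax set `O(u)` of
`⟨H_P(x,u(x),Du(x)), DA⟩ + ⟨H_η(x,u(x),Du(x)), A(x)⟩`. -/
theorem danskin_lower_dini_bound {n N : ℕ}
    (Ω O : Set (EuclideanSpace ℝ (Fin n))) (hΩ : IsOpen Ω)
    (hOc : IsCompact (closure O)) (hOΩ : closure O ⊆ Ω)
    (u : EuclideanSpace ℝ (Fin n) → EuclideanSpace ℝ (Fin N))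
    (hu : ContDiffOn ℝ 1 u Ω)
    (H : EuclideanSpace ℝ (Fin n) × EuclideanSpace ℝ (Fin N) ×
      EuclideanSpace ℝ (Fin N × Fin n) → ℝ)
    (hH : ContDiffOn ℝ 2 H (Ω ×ˢ (Set.univ : Set (EuclideanSpace ℝ (Fin N) ×
      EuclideanSpace ℝ (Fin N × Fin n)))))
    (A : EuclideanSpace ℝ (Fin n) → EuclideanSpace ℝ (Fin N))
    (LA : EuclideanSpace ℝ (Fin n) →ₗ[ℝ] EuclideanSpace ℝ (Fin N))
    (bA : EuclideanSpace ℝ (Fin N)) (hA : ∀ z, A z = LA z + bA)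
    (r : ℝ → ℝ)
    (hr : ∀ lam : ℝ, r lam = Einf H (fun z => u z + lam • A z) O - Einf H u O) :
    ∀ x ∈ {y ∈ closure O | H (y, u y, gradMatrix u y) = Einf H u O},
      ⟪gradient (fun Q => H (x, u x, Q)) (gradMatrix u x), gradMatrix A x⟫
          + ⟪gradient (fun η => H (x, η, gradMatrix u x)) (u x), A x⟫ ≤
        Filter.liminf (fun lam : ℝ => r lam / lam)
          (nhdsWithin (0 : ℝ) (Set.Ioi 0)) := by
  rintro x ⟨hxO, hxE⟩
  have hAc : ContDiff ℝ 1 A := by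
    rw [show A = fun z => LA.toContinuousLinearMap z + bA from funext hA]
    exact LA.toContinuousLinearMap.contDiff.add contDiff_const
  have hux := (hu.contDiffAt (hΩ.mem_nhds (hOΩ hxO))).differentiableAt one_ne_zero
  have hHx : DifferentiableAt ℝ H (jet u x) := (hH.contDiffAt
    ((hΩ.prod isOpen_univ).mem_nhds ⟨hOΩ hxO, trivial⟩)).differentiableAt two_ne_zero
  obtain ⟨C, hC⟩ :=
    exists_Einf_add_smul_sub_le hΩ hOc hOΩ ⟨x, hxO⟩ (hH.of_le one_le_two) hu hAc
  refine le_liminf_div_of_hasDerivWithinAt (C := C)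
    (hHx.hasDerivAt_add_smul_inner_gradient (A x) (gradMatrix A x)).hasDerivWithinAt
    (Eventually.of_forall fun t => ?_) ?_
  · have hjet := jet_add_smul hux (hAc.differentiable one_ne_zero x) t
    have hle := le_Einf hΩ hOc hOΩ hH.continuousOn (hu.add (hAc.const_smul t).contDiffOn) hxO
    simp only [jet] at hjet hle
    rw [hr, zero_smul, add_zero, ← hjet, hxE]
    linarith
  · filter_upwards [Ioc_mem_nhdsGT zero_lt_one] with t ht
    exact (hr t).symm ▸ hC t (Set.Ioc_subset_Icc_self ht)
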